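/- arXiv:2508.05930 — 2 statements merged into one kernel-verified Lean document; each statement's English description precedes it below -/
import Mathlib

section
/- There exists λ₁ > 0 such that for every λ > λ₁ and every positive solution u of the radial problem (r^{N−1} φ(u′(r)))′ = −λ r^{N−1} f(u(r)) on (0,1), u′(0) = 0, u(1) = 0, there exists r₁ ∈ (0, 1/2] with u(r₁) = (u₀ + U₀)/2. -/
/-!
Along a solution the energy `ψ (φ (u')) + λ F (u)`, with `ψ' = φ⁻¹`, is nonincreasing, so
`F (u 0) ≥ 0` and hence `u 0 ≥ U₀ > m := (u₀ + U₀) / 2`. If `u` never equals `m` on `(0, 1/2]`,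
then `u > m` on `[0, 1/2]`, so `f (u) > 0` there, `u` is decreasing, and integrating the
equation gives `φ (-u' r) ≥ λ r f (u r) / N ≳ λ u(r)^α` on `[1/4, 1/2]`. With `β = α / (p - 1) > 1`
this is `-u' ≥ ℓ u^β` with `ℓ ~ λ^(1/(p-1))`, and integrating `(u^(1-β))' ≥ (β - 1) ℓ` over
`[1/4, 1/2]` gives `(β - 1) ℓ / 4 < m^(1-β)`, which fails once `λ` is large.
-/

open Set Filter MeasureTheory

/-- `u` (with derivative `u'`) is a positive solution of the radial problem
`(r^(N-1) φ(u'(r)))' = -λ r^(N-1) f(u(r))` on `(0,1)`, with `u'(0) = 0`, `u(1) = 0`,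
`u ∈ C¹([0,1])`, `φ ∘ u' ∈ C¹((0,1))`, and `u > 0` on `[0,1)`. -/
structure IsPosSol (N : ℕ) (φ f : ℝ → ℝ) (lam : ℝ) (u u' : ℝ → ℝ) : Prop where
  hasDeriv : ∀ r ∈ Set.Icc (0:ℝ) 1, HasDerivAt u (u' r) r
  contDeriv : ContinuousOn u' (Set.Icc 0 1)
  pos : ∀ r ∈ Set.Ico (0:ℝ) 1, 0 < u r
  phiC1 : ∃ w : ℝ → ℝ, ContinuousOn w (Set.Ioo 0 1) ∧
    ∀ r ∈ Set.Ioo (0:ℝ) 1, HasDerivAt (fun s => φ (u' s)) (w r) r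
  eqn : ∀ r ∈ Set.Ioo (0:ℝ) 1,
    HasDerivAt (fun s => s ^ (N - 1) * φ (u' s)) (-(lam * r ^ (N - 1) * f (u r))) r
  deriv_zero : u' 0 = 0
  bd : u 1 = 0

open Topology intervalIntegral

theorem antitoneOn_Icc_of_hasDerivAt_nonpos {g g' : ℝ → ℝ} {a b : ℝ}
    (hg : ContinuousOn g (Icc a b)) (hd : ∀ x ∈ Ioo a b, HasDerivAt g (g' x) x)
    (hg' : ∀ x ∈ Ioo a b, g' x ≤ 0) : AntitoneOn g (Icc a b) :=
  antitoneOn_of_hasDerivWithinAt_nonpos (convex_Icc a b) hg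
    (fun x hx => by rw [interior_Icc] at hx ⊢; exact (hd x hx).hasDerivWithinAt)
    (fun x hx => hg' x (by rwa [interior_Icc] at hx))

theorem monotoneOn_Icc_of_hasDerivAt_nonneg {g g' : ℝ → ℝ} {a b : ℝ}
    (hg : ContinuousOn g (Icc a b)) (hd : ∀ x ∈ Ioo a b, HasDerivAt g (g' x) x)
    (hg' : ∀ x ∈ Ioo a b, 0 ≤ g' x) : MonotoneOn g (Icc a b) :=
  monotoneOn_of_hasDerivWithinAt_nonneg (convex_Icc a b) hg
    (fun x hx => by rw [interior_Icc] at hx ⊢; exact (hd x hx).hasDerivWithinAt)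
    (fun x hx => hg' x (by rwa [interior_Icc] at hx))

theorem exists_orderIso_eq_mul_self {ϕ : ℝ → ℝ} (hϕc : Continuous ϕ) (hϕnn : ∀ s, 0 ≤ ϕ s)
    (hϕeven : ∀ s, ϕ (-s) = ϕ s) (hϕmono : StrictMonoOn ϕ (Ioi 0)) :
    ∃ e : ℝ ≃o ℝ, ⇑e = fun s => ϕ s * s := by
  have hϕpos : ∀ s, 0 < s → 0 < ϕ s := fun s hs =>
    (hϕnn (s / 2)).trans_lt (hϕmono (half_pos hs) hs (half_lt_self hs))
  have hodd : ∀ s, ϕ (-s) * -s = -(ϕ s * s) := fun s => by rw [hϕeven]; ring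
  have hmono : StrictMono fun s => ϕ s * s := by
    refine strictMono_of_odd_strictMonoOn_nonneg hodd fun x hx y hy hxy => ?_
    rcases (mem_Ici.1 hx).eq_or_lt with rfl | hx
    · simpa using mul_pos (hϕpos y hxy) hxy
    · exact mul_lt_mul'' (hϕmono hx (hx.trans hxy) hxy) hxy (hϕnn x) hx.le
  have htop : Tendsto (fun s => ϕ s * s) atTop atTop := by
    refine tendsto_atTop_mono' _ ?_ (tendsto_id.const_mul_atTop (hϕpos 1 one_pos))
    filter_upwards [eventually_ge_atTop 1] with s hs
    exact mul_le_mul_of_nonneg_right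
      (hϕmono.monotoneOn (mem_Ioi.2 one_pos) (one_pos.trans_le hs) hs)
      (zero_le_one.trans hs)
  have hbot : Tendsto (fun s => ϕ s * s) atBot atBot := by
    have := tendsto_neg_atTop_atBot.comp (htop.comp tendsto_neg_atBot_atTop)
    simpa [Function.comp_def, hodd] using this
  exact ⟨StrictMono.orderIsoOfSurjective _ hmono
    ((hϕc.mul continuous_id).surjective htop hbot), rfl⟩

theorem integral_nonneg_of_monotone {g : ℝ → ℝ} (hg : Monotone g) (hg0 : g 0 = 0) (v : ℝ) :
    0 ≤ ∫ t in 0..v, g t := by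
  rcases le_total 0 v with hv | hv
  · exact integral_nonneg hv fun t ht => hg0 ▸ hg ht.1
  · rw [integral_symm, ← intervalIntegral.integral_neg]
    exact integral_nonneg hv fun t ht => neg_nonneg.2 (hg0 ▸ hg ht.2)

theorem continuousOn_primitive_Ici {f : ℝ → ℝ} (hf : ContinuousOn f (Ici 0)) :
    ContinuousOn (fun t => ∫ s in 0..t, f s) (Ici 0) := by
  intro t ht
  have hIcc : Icc 0 (t + 1) ∈ 𝓝[Ici 0] t :=
    mem_nhdsWithin.2 ⟨Iio (t + 1), isOpen_Iio, lt_add_one t, fun s hs => ⟨hs.2, hs.1.le⟩⟩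
  have := continuousOn_primitive_interval (μ := volume) (a := 0) (b := t + 1)
    ((hf.mono fun s hs => ?_).integrableOn_compact isCompact_uIcc)
  · rw [uIcc_of_le (by linarith [mem_Ici.1 ht])] at this
    exact (this t ⟨ht, by linarith⟩).mono_of_mem_nhdsWithin hIcc
  · rw [uIcc_of_le (by linarith [mem_Ici.1 ht])] at hs
    exact hs.1

theorem hasDerivAt_primitive_of_pos {f : ℝ → ℝ} (hf : ContinuousOn f (Ici 0)) {t : ℝ}
    (ht : 0 < t) : HasDerivAt (fun x => ∫ s in 0..x, f s) (f t) t :=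
  integral_hasDerivAt_right ((hf.mono fun s hs => by
      rw [uIcc_of_le ht.le] at hs; exact hs.1).intervalIntegrable)
    ((hf.mono Ioi_subset_Ici_self).stronglyMeasurableAtFilter isOpen_Ioi t ht)
    (hf.continuousAt (Ici_mem_nhds ht))

section UniqueZero

variable {f : ℝ → ℝ} {u0 : ℝ}

theorem neg_of_lt_of_unique_zero (hfm : MonotoneOn f (Ici 0)) (hfu0 : f u0 = 0)
    (hzero : ∀ s, 0 ≤ s → f s = 0 → s = u0) {t : ℝ} (ht : 0 ≤ t) (htu : t < u0) : f t < 0 :=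
  ((hfm ht (ht.trans htu.le) htu.le).trans_eq hfu0).lt_of_ne fun h => htu.ne (hzero t ht h)

theorem pos_of_gt_of_unique_zero (hfm : MonotoneOn f (Ici 0)) (hu0 : 0 ≤ u0) (hfu0 : f u0 = 0)
    (hzero : ∀ s, 0 ≤ s → f s = 0 → s = u0) {t : ℝ} (htu : u0 < t) : 0 < f t :=
  (hfu0.symm.trans_le (hfm hu0 (hu0.trans htu.le) htu.le)).lt_of_ne fun h =>
    htu.ne' (hzero t (hu0.trans htu.le) h.symm)

theorem integral_neg_of_lt_of_unique_zero (hfc : ContinuousOn f (Ici 0))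
    (hfm : MonotoneOn f (Ici 0)) (hu0 : 0 < u0) (hfu0 : f u0 = 0)
    (hzero : ∀ s, 0 ≤ s → f s = 0 → s = u0) {U0 : ℝ}
    (hU0 : ∀ s, 0 < s → ∫ x in 0..s, f x = 0 → s = U0) {t : ℝ} (ht : 0 < t) (htU : t < U0) :
    ∫ x in 0..t, f x < 0 := by
  have hle : ∀ s, 0 < s → s ≤ u0 → ∫ x in 0..s, f x < 0 := fun s hs hsu => by
    have hint : IntervalIntegrable (fun x => -f x) volume 0 s :=
      (hfc.mono fun x hx => by rw [uIcc_of_le hs.le] at hx; exact hx.1).intervalIntegrable.neg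
    have := intervalIntegral_pos_of_pos_on hint
      (fun x hx => neg_pos.2 (neg_of_lt_of_unique_zero hfm hfu0 hzero hx.1.le
        (hx.2.trans_le hsu))) hs
    rwa [intervalIntegral.integral_neg, neg_pos] at this
  rcases le_or_gt t u0 with htu | htu
  · exact hle t ht htu
  by_contra! hF
  obtain ⟨s, hs, hFs⟩ := intermediate_value_Icc htu.le
    ((continuousOn_primitive_Ici hfc).mono fun x hx => hu0.le.trans hx.1)
    ⟨(hle u0 hu0 le_rfl).le, hF⟩
  exact htU.not_ge (hU0 s (hu0.trans_le hs.1) hFs ▸ hs.2)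

end UniqueZero

theorem exists_pos_mul_rpow_le {f : ℝ → ℝ} {m α L : ℝ} (hm : 0 < m) (hα : 0 ≤ α)
    (hfm : MonotoneOn f (Ici m)) (hfm0 : 0 < f m)
    (hlim : Tendsto (fun s => f s / s ^ α) atTop (𝓝 L)) (hL : 0 < L) :
    ∃ c, 0 < c ∧ ∀ s, m ≤ s → c * s ^ α ≤ f s := by
  obtain ⟨S, hS⟩ := eventually_atTop.1 (hlim.eventually (eventually_gt_nhds (half_lt_self hL)))
  set S' := max S m
  have hS'α : 0 < S' ^ α := Real.rpow_pos_of_pos (hm.trans_le (le_max_right S m)) α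
  refine ⟨min (L / 2) (f m / S' ^ α), lt_min (half_pos hL) (div_pos hfm0 hS'α), fun s hs => ?_⟩
  have hsα : 0 < s ^ α := Real.rpow_pos_of_pos (hm.trans_le hs) α
  rcases le_or_gt s S' with hsS | hsS
  · calc min (L / 2) (f m / S' ^ α) * s ^ α ≤ f m / S' ^ α * S' ^ α :=
          mul_le_mul (min_le_right _ _) (Real.rpow_le_rpow (hm.trans_le hs).le hsS hα) hsα.le
            (div_pos hfm0 hS'α).le
      _ = f m := div_mul_cancel₀ _ hS'α.ne'
      _ ≤ f s := hfm self_mem_Ici hs hs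
  · calc min (L / 2) (f m / S' ^ α) * s ^ α ≤ L / 2 * s ^ α := by gcongr; exact min_le_left _ _
      _ ≤ f s := by
          have := hS s ((le_max_left S m).trans hsS.le)
          rw [lt_div_iff₀ hsα] at this
          exact this.le

theorem mul_sub_le_rpow_one_sub_sub {v v' : ℝ → ℝ} {a b ℓ β : ℝ} (hab : a ≤ b) (hβ : 1 < β)
    (hv : ContinuousOn v (Icc a b)) (hpos : ∀ x ∈ Icc a b, 0 < v x)
    (hderiv : ∀ x ∈ Ioo a b, HasDerivAt v (v' x) x)
    (hslope : ∀ x ∈ Ioo a b, ℓ * v x ^ β ≤ -v' x) :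
    (β - 1) * ℓ * (b - a) ≤ v b ^ (1 - β) - v a ^ (1 - β) := by
  have hmono : MonotoneOn (fun x => v x ^ (1 - β) - (β - 1) * ℓ * x) (Icc a b) := by
    refine monotoneOn_Icc_of_hasDerivAt_nonneg
      ((hv.rpow_const fun x hx => Or.inl (hpos x hx).ne').sub
        (continuousOn_const.mul continuousOn_id))
      (fun x hx => ((hderiv x hx).rpow_const (Or.inl (hpos x (Ioo_subset_Icc_self hx)).ne')).sub
        ((hasDerivAt_id x).const_mul ((β - 1) * ℓ))) fun x hx => ?_
    have hvx := hpos x (Ioo_subset_Icc_self hx)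
    have hcancel : v x ^ β * v x ^ (1 - β - 1) = 1 := by
      rw [← Real.rpow_add hvx, show β + (1 - β - 1) = 0 by ring, Real.rpow_zero]
    have := mul_le_mul_of_nonneg_right (mul_le_mul_of_nonneg_left (hslope x hx)
      (sub_nonneg.2 hβ.le)) (Real.rpow_pos_of_pos hvx (1 - β - 1)).le
    simp only [mul_one]
    linear_combination this - (β - 1) * ℓ * hcancel
  have := hmono (left_mem_Icc.2 hab) (right_mem_Icc.2 hab) hab
  simp only at this
  linarith

theorem forall_gt_of_forall_ne {u : ℝ → ℝ} {a b m : ℝ} (hu : ContinuousOn u (Icc a b))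
    (ha : m < u a) (hne : ∀ r ∈ Ioc a b, u r ≠ m) : ∀ r ∈ Icc a b, m < u r := by
  intro r hr
  by_contra! hle
  obtain ⟨c, hc, hcm⟩ := intermediate_value_Icc' hr.1 (hu.mono (Icc_subset_Icc_right hr.2))
    ⟨hle, ha.le⟩
  rcases hc.1.eq_or_lt with rfl | hac
  · exact ha.ne' hcm
  · exact hne c ⟨hac, hc.2.trans hr.2⟩ hcm

namespace IsPosSol

variable {N : ℕ} {φ f : ℝ → ℝ} {lam : ℝ} {u u' : ℝ → ℝ}

theorem continuousOn (S : IsPosSol N φ f lam u u') : ContinuousOn u (Icc 0 1) :=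
  fun r hr => (S.hasDeriv r hr).continuousAt.continuousWithinAt

theorem nonneg (S : IsPosSol N φ f lam u u') {r : ℝ} (hr : r ∈ Icc 0 1) : 0 ≤ u r := by
  rcases hr.2.lt_or_eq with h | rfl
  · exact (S.pos r ⟨hr.1, h⟩).le
  · exact S.bd.ge

theorem energy_deriv_nonpos (hφ : ∀ s, 0 ≤ s * φ s) (S : IsPosSol N φ f lam u u')
    {w : ℝ → ℝ} (hw : ∀ r ∈ Ioo 0 1, HasDerivAt (fun s => φ (u' s)) (w r) r) {r : ℝ}
    (hr : r ∈ Ioo 0 1) : u' r * w r + lam * (f (u r) * u' r) ≤ 0 := by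
  have hprod : (N - 1 : ℕ) * r ^ (N - 1 - 1) * φ (u' r) + r ^ (N - 1) * w r =
      -(lam * r ^ (N - 1) * f (u r)) :=
    ((hasDerivAt_pow (N - 1) r).mul (hw r hr)).unique (S.eqn r hr)
  have hsign : (u' r * w r + lam * (f (u r) * u' r)) * r ^ (N - 1) =
      -((N - 1 : ℕ) * r ^ (N - 1 - 1) * (u' r * φ (u' r))) := by
    linear_combination u' r * hprod
  have hrN := pow_pos hr.1 (N - 1)
  refine nonpos_of_mul_nonpos_left ?_ hrN
  rw [hsign, neg_nonpos]
  exact mul_nonneg (mul_nonneg (Nat.cast_nonneg _) (pow_nonneg hr.1.le _)) (hφ (u' r))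

theorem phi_deriv_le_of_forall_le (hN : 0 < N) (hφc : Continuous φ) (hφ0 : φ 0 = 0) (hlam : 0 ≤ lam)
    (S : IsPosSol N φ f lam u u') {c r : ℝ} (hr : r ∈ Ioc 0 1)
    (hc : ∀ s ∈ Ioo 0 r, c ≤ f (u s)) : φ (u' r) ≤ -(lam * c * r / N) := by
  have hNR : (0 : ℝ) < N := Nat.cast_pos.2 hN
  have hanti : AntitoneOn (fun s => s ^ (N - 1) * φ (u' s) + lam * c / N * s ^ N) (Icc 0 r) := by
    refine antitoneOn_Icc_of_hasDerivAt_nonpos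
      (((continuous_pow _).continuousOn.mul (hφc.comp_continuousOn
        (S.contDeriv.mono (Icc_subset_Icc_right hr.2)))).add (by fun_prop))
      (fun s hs => (S.eqn s ⟨hs.1, hs.2.trans_le hr.2⟩).add
        ((hasDerivAt_pow N s).const_mul (lam * c / N))) fun s hs => ?_
    have hNs : lam * c / N * (N * s ^ (N - 1)) = lam * c * s ^ (N - 1) := by field_simp
    rw [hNs]
    nlinarith [mul_le_mul_of_nonneg_left (hc s hs) hlam, pow_pos hs.1 (N - 1)]
  have h := hanti (left_mem_Icc.2 hr.1.le) (right_mem_Icc.2 hr.1.le) hr.1.le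
  simp only [S.deriv_zero, hφ0, mul_zero, zero_pow hN.ne', zero_add] at h
  have hrN : r ^ N = r ^ (N - 1) * r := by rw [← pow_succ, Nat.sub_add_cancel hN]
  have : r ^ (N - 1) * (φ (u' r) + lam * c * r / N) ≤ 0 := by
    rw [hrN] at h; linear_combination h
  linarith [nonpos_of_mul_nonpos_right this (pow_pos hr.1 (N - 1))]

end IsPosSol

namespace IsPosSol

variable {N : ℕ} {φ f : ℝ → ℝ} {lam : ℝ} {u u' : ℝ → ℝ}

theorem integral_nonneg_at_zero {φ : ℝ ≃o ℝ} (hφ0 : φ 0 = 0) (hlam : 0 < lam)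
    (hfc : ContinuousOn f (Ici 0)) (S : IsPosSol N φ f lam u u') : 0 ≤ ∫ s in 0..u 0, f s := by
  obtain ⟨w, -, hw⟩ := S.phiC1
  -- `ψ ∘ φ ∘ u'` is differentiable although only `φ ∘ u'`, not `u'`, is
  set ψ : ℝ → ℝ := fun v => ∫ t in 0..v, φ.symm t
  have hψ : ∀ v, HasDerivAt ψ (φ.symm v) v := fun v =>
    integral_hasDerivAt_right (φ.symm.continuous.intervalIntegrable 0 v)
      (φ.symm.continuous.stronglyMeasurableAtFilter _ _) φ.symm.continuous.continuousAt
  have hanti : AntitoneOn (fun r => ψ (φ (u' r)) + lam * ∫ s in 0..u r, f s) (Icc 0 1) := by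
    refine antitoneOn_Icc_of_hasDerivAt_nonpos
      (((continuous_iff_continuousAt.2 fun v => (hψ v).continuousAt).comp
        φ.continuous).comp_continuousOn S.contDeriv |>.add
        (continuousOn_const.mul ((continuousOn_primitive_Ici hfc).comp S.continuousOn
          fun r hr => S.nonneg hr)))
      (fun r hr => ?_) (fun r hr => S.energy_deriv_nonpos (fun s => ?_) hw hr)
    · have hψr := (hψ (φ (u' r))).comp r (hw r hr)
      rw [φ.symm_apply_apply] at hψr
      exact hψr.add (((hasDerivAt_primitive_of_pos hfc (S.pos r ⟨hr.1.le, hr.2⟩)).comp r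
        (S.hasDeriv r (Ioo_subset_Icc_self hr))).const_mul lam)
    · rcases le_total 0 s with hs | hs
      · exact mul_nonneg hs (hφ0 ▸ φ.monotone hs)
      · exact mul_nonneg_of_nonpos_of_nonpos hs (hφ0 ▸ φ.monotone hs)
  have h := hanti (left_mem_Icc.2 zero_le_one) (right_mem_Icc.2 zero_le_one) zero_le_one
  have hψ0 : ψ 0 = 0 := intervalIntegral.integral_same
  have hψ1 : 0 ≤ ψ (φ (u' 1)) :=
    integral_nonneg_of_monotone φ.symm.monotone (φ.symm_apply_eq.2 hφ0.symm) _
  simp only [S.deriv_zero, hφ0, hψ0, S.bd, intervalIntegral.integral_same, mul_zero,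
    add_zero, zero_add] at h
  exact nonneg_of_mul_nonneg_right (hψ1.trans h) hlam

theorem deriv_neg_of_forall_le (hN : 0 < N) (hφc : Continuous φ) (hφm : Monotone φ) (hφ0 : φ 0 = 0)
    (hlam : 0 < lam) (S : IsPosSol N φ f lam u u') {c r : ℝ} (hc : 0 < c) (hr : r ∈ Ioc 0 1)
    (hcf : ∀ s ∈ Ioo 0 r, c ≤ f (u s)) : u' r < 0 := by
  refine hφm.reflect_lt ((S.phi_deriv_le_of_forall_le hN hφc hφ0 hlam.le hr hcf).trans_lt ?_)
  rw [hφ0, neg_lt_zero]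
  have := hr.1
  positivity

theorem antitoneOn_of_forall_le (hN : 0 < N) (hφc : Continuous φ) (hφm : Monotone φ) (hφ0 : φ 0 = 0)
    (hlam : 0 < lam) (S : IsPosSol N φ f lam u u') {b c : ℝ} (hb : b ≤ 1) (hc : 0 < c)
    (hcf : ∀ s ∈ Ioo 0 b, c ≤ f (u s)) : AntitoneOn u (Icc 0 b) :=
  antitoneOn_Icc_of_hasDerivAt_nonpos (S.continuousOn.mono (Icc_subset_Icc_right hb))
    (fun r hr => S.hasDeriv r ⟨hr.1.le, hr.2.le.trans hb⟩) fun _ hr =>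
      (S.deriv_neg_of_forall_le hN hφc hφm hφ0 hlam hc ⟨hr.1, hr.2.le.trans hb⟩
        fun s hs => hcf s ⟨hs.1, hs.2.trans hr.2⟩).le

section LargeLambda

variable {p c1 m α c0 : ℝ}

theorem rpow_mul_le_neg_deriv (hN : 0 < N) (hφc : Continuous φ) (hφm : Monotone φ)
    (hodd : ∀ s, φ (-s) = -φ s) (hp : 1 < p) (hc1 : 0 < c1)
    (hgrow : ∀ s, 0 ≤ s → φ s ≤ c1 * s ^ (p - 1)) (hfm : MonotoneOn f (Ici 0)) (hm : 0 < m)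
    (hα : 0 ≤ α) (hc0 : 0 < c0) (hfc0 : ∀ s, m ≤ s → c0 * s ^ α ≤ f s) (hlam : 0 < lam)
    (S : IsPosSol N φ f lam u u') (hgt : ∀ r ∈ Icc (0 : ℝ) (1 / 2), m < u r) {r : ℝ}
    (hr : r ∈ Icc (1 / 4 : ℝ) (1 / 2)) :
    (lam * c0 / (4 * N * c1)) ^ (p - 1)⁻¹ * u r ^ (α / (p - 1)) ≤ -u' r := by
  have hφ0 : φ 0 = 0 := by have := hodd 0; rw [neg_zero] at this; linarith
  have hr0 : 0 < r := lt_of_lt_of_le (by norm_num) hr.1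
  have hgtr := hgt r ⟨hr0.le, hr.2⟩
  have hur : 0 < u r := hm.trans hgtr
  have hfu : ∀ s ∈ Ioo 0 (1 / 2 : ℝ), c0 * m ^ α ≤ f (u s) := fun s hs =>
    have hms := (hgt s (Ioo_subset_Icc_self hs)).le
    (mul_le_mul_of_nonneg_left (Real.rpow_le_rpow hm.le hms hα) hc0.le).trans (hfc0 _ hms)
  have hcm : 0 < c0 * m ^ α := by positivity
  have hu'r : u' r < 0 :=
    S.deriv_neg_of_forall_le hN hφc hφm hφ0 hlam hcm ⟨hr0, hr.2.trans (by norm_num)⟩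
    fun s hs => hfu s ⟨hs.1, hs.2.trans_le hr.2⟩
  have hanti := S.antitoneOn_of_forall_le hN hφc hφm hφ0 hlam (by norm_num) hcm hfu
  have hbound : φ (u' r) ≤ -(lam * (c0 * u r ^ α) * r / N) :=
    S.phi_deriv_le_of_forall_le hN hφc hφ0 hlam.le ⟨hr0, hr.2.trans (by norm_num)⟩ fun s hs =>
      (hfc0 _ hgtr.le).trans (hfm hur.le (S.nonneg ⟨hs.1.le, by linarith [hs.2, hr.2]⟩)
        (hanti ⟨hs.1.le, hs.2.le.trans hr.2⟩ ⟨hr0.le, hr.2⟩ hs.2.le))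
  have hgrow' := hgrow (-u' r) (neg_nonneg.2 hu'r.le)
  rw [hodd] at hgrow'
  have hNR : (0 : ℝ) < N := Nat.cast_pos.2 hN
  have key : lam * c0 / (4 * N * c1) * u r ^ α ≤ (-u' r) ^ (p - 1) := by
    rw [div_mul_eq_mul_div, div_le_iff₀ (by positivity)]
    have : lam * c0 * u r ^ α * (1 / 4) ≤ lam * c0 * u r ^ α * r :=
      mul_le_mul_of_nonneg_left hr.1 (by positivity)
    have : lam * (c0 * u r ^ α) * r / N ≤ c1 * (-u' r) ^ (p - 1) := by linarith
    rw [div_le_iff₀ hNR] at this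
    linarith
  have hp1 : p - 1 ≠ 0 := (sub_pos.2 hp).ne'
  calc (lam * c0 / (4 * N * c1)) ^ (p - 1)⁻¹ * u r ^ (α / (p - 1))
      = (lam * c0 / (4 * N * c1) * u r ^ α) ^ (p - 1)⁻¹ := by
        rw [Real.mul_rpow (by positivity) (by positivity), ← Real.rpow_mul hur.le, ← div_eq_mul_inv]
    _ ≤ ((-u' r) ^ (p - 1)) ^ (p - 1)⁻¹ :=
        Real.rpow_le_rpow (by positivity) key (inv_nonneg.2 (sub_pos.2 hp).le)
    _ = -u' r := Real.rpow_rpow_inv (neg_nonneg.2 hu'r.le) hp1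

theorem lt_of_forall_gt (hN : 0 < N) (hφc : Continuous φ) (hφm : Monotone φ)
    (hodd : ∀ s, φ (-s) = -φ s) (hp : 1 < p) (hc1 : 0 < c1)
    (hgrow : ∀ s, 0 ≤ s → φ s ≤ c1 * s ^ (p - 1)) (hfm : MonotoneOn f (Ici 0)) (hm : 0 < m)
    (hα : p - 1 < α) (hc0 : 0 < c0) (hfc0 : ∀ s, m ≤ s → c0 * s ^ α ≤ f s) (hlam : 0 < lam)
    (S : IsPosSol N φ f lam u u') (hgt : ∀ r ∈ Icc (0 : ℝ) (1 / 2), m < u r) :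
    lam < 4 * N * c1 / c0 * (4 * m ^ (1 - α / (p - 1)) / (α / (p - 1) - 1)) ^ (p - 1) := by
  have hp1 : 0 < p - 1 := sub_pos.2 hp
  set β := α / (p - 1)
  have hβ : 1 < β := (one_lt_div hp1).2 hα
  set ℓ := (lam * c0 / (4 * N * c1)) ^ (p - 1)⁻¹
  have hupos : ∀ x ∈ Icc (1 / 4 : ℝ) (1 / 2), 0 < u x := fun x hx =>
    hm.trans (hgt x ⟨le_trans (by norm_num) hx.1, hx.2⟩)
  have hcmp := mul_sub_le_rpow_one_sub_sub (by norm_num) hβ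
    (S.continuousOn.mono (Icc_subset_Icc (by norm_num) (by norm_num))) hupos
    (fun x hx => S.hasDeriv x ⟨le_trans (by norm_num) hx.1.le, hx.2.le.trans (by norm_num)⟩)
    fun x hx => S.rpow_mul_le_neg_deriv hN hφc hφm hodd hp hc1 hgrow hfm hm (hp1.trans hα).le
      hc0 hfc0 hlam hgt (Ioo_subset_Icc_self hx)
  have hhalf : u (1 / 2) ^ (1 - β) ≤ m ^ (1 - β) :=
    Real.rpow_le_rpow_of_nonpos hm (hgt _ (by norm_num)).le (by linarith)
  have hquarter := Real.rpow_pos_of_pos (hupos (1 / 4) (by norm_num)) (1 - β)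
  have hℓ : ℓ < 4 * m ^ (1 - β) / (β - 1) := by
    rw [lt_div_iff₀ (by linarith)]
    linarith
  have hNR : (0 : ℝ) < N := Nat.cast_pos.2 hN
  have hlamℓ : lam * c0 / (4 * N * c1) = ℓ ^ (p - 1) :=
    (Real.rpow_inv_rpow (by positivity) hp1.ne').symm
  have := Real.rpow_lt_rpow (by positivity) hℓ hp1
  rw [← hlamℓ, div_lt_iff₀ (by positivity)] at this
  rw [div_mul_eq_mul_div, lt_div_iff₀ hc0]
  linarith

end LargeLambda

end IsPosSol

theorem exists_r1_half_general    (N : ℕ) (hN : 1 < N)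
    (ϕ φ : ℝ → ℝ)
    (hϕc : Continuous ϕ) (hϕnn : ∀ s, 0 ≤ ϕ s) (hϕeven : ∀ s, ϕ (-s) = ϕ s)
    (hϕmono : StrictMonoOn ϕ (Set.Ioi 0))
    (hφ : ∀ s, φ s = ϕ s * s)
    (p c1 c2 : ℝ) (hp : 1 < p) (hc1 : 0 < c1)
    (hgrow : ∀ r : ℝ, 0 ≤ r → c2 * r ^ (p - 1) ≤ φ r ∧ φ r ≤ c1 * r ^ (p - 1))
    (f : ℝ → ℝ) (hfc : ContinuousOn f (Set.Ici 0)) (hfm : MonotoneOn f (Set.Ici 0))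
    (u0 : ℝ) (hu0 : 0 < u0) (hfu0 : f u0 = 0)
    (hzero : ∀ s : ℝ, 0 ≤ s → f s = 0 → s = u0)
    (α L : ℝ) (hα : p - 1 < α)
    (hlim : Filter.Tendsto (fun s => f s / s ^ α) Filter.atTop (nhds L)) (hLpos : 0 < L)
    (F : ℝ → ℝ) (hF : ∀ t, F t = ∫ s in (0:ℝ)..t, f s)
    (U0 : ℝ)
    (hU0uniq : ∀ s : ℝ, 0 < s → F s = 0 → s = U0)
    (hu0U0 : u0 < U0)
 :
    ∃ lam1 : ℝ, 0 < lam1 ∧ ∀ lam : ℝ, lam1 < lam →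
      ∀ u u' : ℝ → ℝ, IsPosSol N φ f lam u u' →
        ∃ r1 ∈ Set.Ioc (0:ℝ) (1/2), u r1 = (u0 + U0) / 2 := by
  obtain ⟨e, he⟩ := exists_orderIso_eq_mul_self hϕc hϕnn hϕeven hϕmono
  obtain rfl : φ = e := funext fun s => (hφ s).trans (congrFun he s).symm
  have hodd : ∀ s, e (-s) = -e s := fun s => by rw [hφ, hφ, hϕeven]; ring
  have he0 : e 0 = 0 := by rw [hφ, mul_zero]
  have hN0 : 0 < N := by omega
  set m := (u0 + U0) / 2 with hm_def
  have hu0m : u0 < m := by linarith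
  have hmU0 : m < U0 := by linarith
  have hm : 0 < m := hu0.trans hu0m
  obtain ⟨c0, hc0, hfc0⟩ := exists_pos_mul_rpow_le hm (by linarith)
    (hfm.mono (Ici_subset_Ici.2 hm.le)) (pos_of_gt_of_unique_zero hfm hu0.le hfu0 hzero hu0m)
    hlim hLpos
  have hβ : 0 < α / (p - 1) - 1 := sub_pos.2 ((one_lt_div (sub_pos.2 hp)).2 hα)
  refine ⟨4 * N * c1 / c0 * (4 * m ^ (1 - α / (p - 1)) / (α / (p - 1) - 1)) ^ (p - 1),
    by positivity, fun lam hlam u u' S => ?_⟩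
  have hlam0 : 0 < lam := lt_trans (by positivity) hlam
  have hU0u : U0 ≤ u 0 := not_lt.1 fun h =>
    (integral_neg_of_lt_of_unique_zero hfc hfm hu0 hfu0 hzero
      (fun s hs hs0 => hU0uniq s hs ((hF s).trans hs0)) (S.pos 0 ⟨le_rfl, one_pos⟩) h).not_ge
      (S.integral_nonneg_at_zero he0 hlam0 hfc)
  by_contra! hno
  have hgt := forall_gt_of_forall_ne (S.continuousOn.mono (Icc_subset_Icc_right (by norm_num)))
    (hmU0.trans_le hU0u) hno
  exact hlam.not_gt (S.lt_of_forall_gt hN0 e.continuous e.monotone hodd hp hc1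
    (fun s hs => (hgrow s hs).2) hfm hm hα hc0 hfc0 hlam0 hgt)

theorem exists_r1_half    (N : ℕ) (hN : 1 < N)
    (ϕ φ : ℝ → ℝ)
    (hϕc : Continuous ϕ) (hϕnn : ∀ s, 0 ≤ ϕ s) (hϕeven : ∀ s, ϕ (-s) = ϕ s)
    (hϕdiff : ∀ s : ℝ, s ≠ 0 → DifferentiableAt ℝ ϕ s)
    (hϕmono : StrictMonoOn ϕ (Set.Ioi 0))
    (hφ : ∀ s, φ s = ϕ s * s)
    (p c1 c2 : ℝ) (hp : 1 < p) (hc1 : 0 < c1) (hc2 : 0 < c2)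
    (hgrow : ∀ r : ℝ, 0 ≤ r → c2 * r ^ (p - 1) ≤ φ r ∧ φ r ≤ c1 * r ^ (p - 1))
    (f : ℝ → ℝ) (hfc : ContinuousOn f (Set.Ici 0)) (hfm : MonotoneOn f (Set.Ici 0))
    (hf0 : f 0 < 0) (u0 : ℝ) (hu0 : 0 < u0) (hfu0 : f u0 = 0)
    (hzero : ∀ s : ℝ, 0 ≤ s → f s = 0 → s = u0)
    (α L : ℝ) (hα : p - 1 < α)
    (hαsub : p < (N:ℝ) → α < (N:ℝ) * p / ((N:ℝ) - p))
    (hlim : Filter.Tendsto (fun s => f s / s ^ α) Filter.atTop (nhds L)) (hLpos : 0 < L)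
    (F : ℝ → ℝ) (hF : ∀ t, F t = ∫ s in (0:ℝ)..t, f s)
    (U0 : ℝ) (hU0 : 0 < U0) (hFU0 : F U0 = 0)
    (hU0uniq : ∀ s : ℝ, 0 < s → F s = 0 → s = U0)
    (hu0U0 : u0 < U0)
 :
    ∃ lam1 : ℝ, 0 < lam1 ∧ ∀ lam : ℝ, lam1 < lam →
      ∀ u u' : ℝ → ℝ, IsPosSol N φ f lam u u' →
        ∃ r1 ∈ Set.Ioc (0:ℝ) (1/2), u r1 = (u0 + U0) / 2 :=
  exists_r1_half_general N hN ϕ φ hϕc hϕnn hϕeven hϕmono hφ p c1 c2 hp hc1 hgrow f hfc hfm u0 hu0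
    hfu0 hzero α L hα hlim hLpos F hF U0 hU0uniq hu0U0
end

section
/- If λ > 0 and u is a positive solution of the radial problem, then the energy E(r) := λ F(u(r)) + φ(u′(r)) u′(r) − Φ(u′(r)) satisfies E(r) ≥ 0 for all r ∈ [0,1]. -/
/-!
Along a solution, `E' = u' (λ f(u) + (φ ∘ u')')` on `(0, 1)`, and the radial equation turns this
into `E' = -(N - 1) φ(u') u' / r ≤ 0`, so `E` is nonincreasing on `[0, 1]`. At `r = 1` we have
`u = 0`, hence `E(1) = φ(u') u' - Φ(u') ≥ 0` because `Φ(t) ≤ φ(t) t` for monotone `φ`.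
Since `u'` is merely continuous, the derivative of `φ(u') u' - Φ(u')` is obtained directly from
the two-sided bound `φ a (b - a) ≤ Φ b - Φ a ≤ φ b (b - a)` rather than by the chain rule.
-/

open Set Filter MeasureTheory

open Asymptotics Topology intervalIntegral

lemma monotone_mul_self_of_even {ϕ : ℝ → ℝ} (hnn : ∀ s, 0 ≤ ϕ s) (heven : ∀ s, ϕ (-s) = ϕ s)
    (hmono : MonotoneOn ϕ (Ioi 0)) : Monotone fun s => ϕ s * s := by
  refine monotone_of_odd_of_monotoneOn_nonneg (fun s => by rw [heven]; ring) ?_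
  intro p hp q hq hpq
  rcases (mem_Ici.1 hp).eq_or_lt with rfl | hp_pos
  · simpa using mul_nonneg (hnn q) hq
  · calc ϕ p * p ≤ ϕ q * p := by gcongr; exact hmono hp_pos (hp_pos.trans_le hpq) hpq
      _ ≤ ϕ q * q := by gcongr; exact hnn q

namespace Monotone

variable {φ : ℝ → ℝ}

lemma mul_sub_le_integral (hφ : Monotone φ) {a b : ℝ} (hab : a ≤ b) :
    φ a * (b - a) ≤ ∫ t in a..b, φ t := by
  calc φ a * (b - a) = ∫ _ in a..b, φ a := by simp [mul_comm]
    _ ≤ ∫ t in a..b, φ t :=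
      integral_mono_on hab intervalIntegrable_const hφ.intervalIntegrable fun t ht => hφ ht.1

lemma integral_le_mul_sub (hφ : Monotone φ) {a b : ℝ} (hab : a ≤ b) :
    ∫ t in a..b, φ t ≤ φ b * (b - a) := by
  calc ∫ t in a..b, φ t ≤ ∫ _ in a..b, φ b :=
      integral_mono_on hab hφ.intervalIntegrable intervalIntegrable_const fun t ht => hφ ht.2
    _ = φ b * (b - a) := by simp [mul_comm]

lemma integral_le_mul_self (hφ : Monotone φ) (t : ℝ) : ∫ s in 0..t, φ s ≤ φ t * t := by
  rcases le_total 0 t with ht | ht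
  · simpa using hφ.integral_le_mul_sub ht
  · have := hφ.mul_sub_le_integral ht
    rw [integral_symm]
    linarith

lemma abs_mul_sub_integral_le (hφ : Monotone φ) (a b : ℝ) :
    |(b - a) * φ b - ∫ t in a..b, φ t| ≤ |(b - a) * (φ b - φ a)| := by
  rcases le_total a b with hab | hba
  · have h₁ := hφ.mul_sub_le_integral hab
    have h₂ := hφ.integral_le_mul_sub hab
    exact abs_le_abs_of_nonneg (by linarith) (by linarith)
  · have h₁ := hφ.mul_sub_le_integral hba
    have h₂ := hφ.integral_le_mul_sub hba
    rw [integral_symm]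
    exact abs_le_abs_of_nonneg (by linarith) (by linarith)

lemma hasDerivAt_mul_sub_integral_comp (hφ : Monotone φ) {v : ℝ → ℝ} {r w : ℝ}
    (hv : ContinuousAt v r) (hφv : HasDerivAt (fun s => φ (v s)) w r) :
    HasDerivAt (fun s => φ (v s) * v s - ∫ t in 0..v s, φ t) (v r * w) r := by
  have hO : (fun s => φ (v s) - φ (v r)) =O[𝓝 r] fun s => s - r := hφv.isBigO_sub
  have hv_sub : (fun s => v s - v r) =o[𝓝 r] fun _ => (1 : ℝ) := by
    rw [isLittleO_one_iff]
    simpa using hv.tendsto.sub_const (v r)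
  have hrem : (fun s => (v s - v r) * φ (v s) - ∫ t in v r..v s, φ t) =o[𝓝 r] fun s => s - r :=
    (isBigO_of_le _ fun s => hφ.abs_mul_sub_integral_le (v r) (v s)).trans_isLittleO
      (by simpa using hv_sub.mul_isBigO hO)
  rw [hasDerivAt_iff_isLittleO] at hφv ⊢
  refine ((hφv.const_mul_left (v r)).add hrem).congr' (Eventually.of_forall fun s => ?_)
    EventuallyEq.rfl
  dsimp only
  rw [← integral_interval_sub_left (a := 0) hφ.intervalIntegrable hφ.intervalIntegrable, smul_eq_mul,
    smul_eq_mul]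
  ring

end Monotone

lemma hasDerivWithinAt_integral_Ici {f : ℝ → ℝ} (hf : ContinuousOn f (Ici 0)) {t : ℝ}
    (ht : 0 ≤ t) : HasDerivWithinAt (fun x => ∫ s in 0..x, f s) (f t) (Ici 0) t := by
  have hg : Continuous fun x => f (max x 0) :=
    hf.comp_continuous (continuous_id.max continuous_const) fun x => le_max_right x 0
  have heq : EqOn (fun x => ∫ s in 0..x, f s) (fun x => ∫ s in 0..x, f (max s 0)) (Ici 0) :=
    fun x hx => integral_congr fun s hs => by
      rw [uIcc_of_le hx] at hs
      simp [max_eq_left hs.1]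
  simpa [max_eq_left ht] using
    ((hg.integral_hasStrictDerivAt 0 t).hasDerivAt.hasDerivWithinAt).congr heq (heq ht)

lemma radial_energy_deriv_nonpos {n : ℕ} {ψ : ℝ → ℝ} {lam c v w r : ℝ} (hr : 0 < r)
    (hψ : HasDerivAt ψ w r) (heqn : HasDerivAt (fun s => s ^ n * ψ s) (-(lam * r ^ n * c)) r)
    (hψv : 0 ≤ ψ r * v) : lam * (c * v) + v * w ≤ 0 := by
  have hderiv := ((hasDerivAt_pow n r).mul hψ).unique heqn
  have hrn : 0 < r ^ n := pow_pos hr n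
  have hsign : 0 ≤ (n : ℝ) * r ^ (n - 1) * (ψ r * v) := by positivity
  have hmul : r ^ n * (lam * (c * v) + v * w) = -((n : ℝ) * r ^ (n - 1) * (ψ r * v)) := by
    linear_combination v * hderiv
  nlinarith

noncomputable def radialEnergy (φ f : ℝ → ℝ) (lam : ℝ) (u u' : ℝ → ℝ) (r : ℝ) : ℝ :=
  lam * (∫ s in 0..u r, f s) + φ (u' r) * u' r - ∫ s in 0..u' r, φ s

lemma IsPosSol.antitoneOn_radialEnergy {N : ℕ} {φ f : ℝ → ℝ} {lam : ℝ} {u u' : ℝ → ℝ}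
    (hu : IsPosSol N φ f lam u u') (hφ : Monotone φ) (hφc : Continuous φ)
    (hφ_sign : ∀ t, 0 ≤ φ t * t) (hf : ContinuousOn f (Ici 0)) :
    AntitoneOn (radialEnergy φ f lam u u') (Icc 0 1) := by
  obtain ⟨w, -, hw⟩ := hu.phiC1
  have hcont : ContinuousOn (radialEnergy φ f lam u u') (Icc 0 1) := by
    have hu_nonneg : MapsTo u (Icc 0 1) (Ici 0) := fun r hr => by
      rcases hr.2.eq_or_lt with rfl | hr1
      · exact hu.bd.ge
      · exact (hu.pos r ⟨hr.1, hr1⟩).le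
    have hF : ContinuousOn (fun x => ∫ s in 0..x, f s) (Ici 0) := fun t ht =>
      (hasDerivWithinAt_integral_Ici hf ht).continuousWithinAt
    have huc : ContinuousOn u (Icc 0 1) := fun r hr =>
      (hu.hasDeriv r hr).continuousAt.continuousWithinAt
    have hΦ : Continuous fun x => ∫ s in 0..x, φ s :=
      continuous_primitive (fun _ _ => hφ.intervalIntegrable) 0
    exact ((continuousOn_const.mul (hF.comp huc hu_nonneg)).add
      ((hφc.comp_continuousOn hu.contDeriv).mul hu.contDeriv)).sub
      (hΦ.comp_continuousOn hu.contDeriv)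
  have hderiv : ∀ r ∈ Ioo (0 : ℝ) 1,
      HasDerivAt (radialEnergy φ f lam u u') (lam * (f (u r) * u' r) + u' r * w r) r := by
    intro r hr
    have hpos : 0 < u r := hu.pos r ⟨hr.1.le, hr.2⟩
    have hFu := ((hasDerivWithinAt_integral_Ici hf hpos.le).hasDerivAt (Ici_mem_nhds hpos)).comp r
      (hu.hasDeriv r (Ioo_subset_Icc_self hr))
    have hu'c : ContinuousAt u' r := hu.contDeriv.continuousAt (Icc_mem_nhds hr.1 hr.2)
    refine ((hFu.const_mul lam).add (hφ.hasDerivAt_mul_sub_integral_comp hu'c (hw r hr)))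
      |>.congr_of_eventuallyEq (Eventually.of_forall fun s => ?_)
    simp only [radialEnergy, Function.comp_apply, Pi.add_apply]
    ring
  refine antitoneOn_of_deriv_nonpos (convex_Icc 0 1) hcont ?_ fun r hr => ?_
  · rw [interior_Icc]
    exact fun r hr => (hderiv r hr).differentiableAt.differentiableWithinAt
  · rw [interior_Icc] at hr
    rw [(hderiv r hr).deriv]
    exact radial_energy_deriv_nonpos hr.1 (hw r hr) (hu.eqn r hr) (hφ_sign _)

theorem energy_nonneg_general    (N : ℕ)
    (ϕ φ : ℝ → ℝ)
    (hϕc : Continuous ϕ) (hϕnn : ∀ s, 0 ≤ ϕ s) (hϕeven : ∀ s, ϕ (-s) = ϕ s)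
    (hϕmono : StrictMonoOn ϕ (Set.Ioi 0))
    (hφ : ∀ s, φ s = ϕ s * s)
    (f : ℝ → ℝ) (hfc : ContinuousOn f (Set.Ici 0))
    (F : ℝ → ℝ) (hF : ∀ t, F t = ∫ s in (0:ℝ)..t, f s)
    (Φ : ℝ → ℝ) (hΦ : ∀ t, Φ t = ∫ s in (0:ℝ)..t, φ s)
    (lam : ℝ) (u u' : ℝ → ℝ) (hu : IsPosSol N φ f lam u u')
    (E : ℝ → ℝ) (hE : ∀ r, E r = lam * F (u r) + φ (u' r) * u' r - Φ (u' r)) :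
    ∀ r ∈ Set.Icc (0:ℝ) 1, 0 ≤ E r := by
  obtain rfl : φ = fun s => ϕ s * s := funext hφ
  have hmono : Monotone fun s => ϕ s * s :=
    monotone_mul_self_of_even hϕnn hϕeven hϕmono.monotoneOn
  have hsign : ∀ t, 0 ≤ ϕ t * t * t := fun t => by
    rw [mul_assoc]
    exact mul_nonneg (hϕnn t) (mul_self_nonneg t)
  obtain rfl : E = radialEnergy (fun s => ϕ s * s) f lam u u' := by
    ext r
    simp only [hE, hF, hΦ, radialEnergy]
  have hE_one : 0 ≤ radialEnergy (fun s => ϕ s * s) f lam u u' 1 := by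
    simp only [radialEnergy, hu.bd, integral_same, mul_zero, zero_add, sub_nonneg]
    exact hmono.integral_le_mul_self (u' 1)
  intro r hr
  exact hE_one.trans (hu.antitoneOn_radialEnergy hmono (hϕc.mul continuous_id) hsign hfc
    hr (right_mem_Icc.2 zero_le_one) hr.2)

theorem energy_nonneg    (N : ℕ) (hN : 1 < N)
    (ϕ φ : ℝ → ℝ)
    (hϕc : Continuous ϕ) (hϕnn : ∀ s, 0 ≤ ϕ s) (hϕeven : ∀ s, ϕ (-s) = ϕ s)
    (hϕdiff : ∀ s : ℝ, s ≠ 0 → DifferentiableAt ℝ ϕ s)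
    (hϕmono : StrictMonoOn ϕ (Set.Ioi 0))
    (hφ : ∀ s, φ s = ϕ s * s)
    (f : ℝ → ℝ) (hfc : ContinuousOn f (Set.Ici 0)) (hfm : MonotoneOn f (Set.Ici 0))
    (hf0 : f 0 < 0) (u0 : ℝ) (hu0 : 0 < u0) (hfu0 : f u0 = 0)
    (hzero : ∀ s : ℝ, 0 ≤ s → f s = 0 → s = u0)
    (F : ℝ → ℝ) (hF : ∀ t, F t = ∫ s in (0:ℝ)..t, f s)
    (Φ : ℝ → ℝ) (hΦ : ∀ t, Φ t = ∫ s in (0:ℝ)..t, φ s)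
    (lam : ℝ) (hlam : 0 < lam) (u u' : ℝ → ℝ) (hu : IsPosSol N φ f lam u u')
    (E : ℝ → ℝ) (hE : ∀ r, E r = lam * F (u r) + φ (u' r) * u' r - Φ (u' r)) :
    ∀ r ∈ Set.Icc (0:ℝ) 1, 0 ≤ E r :=
  energy_nonneg_general N ϕ φ hϕc hϕnn hϕeven hϕmono hφ f hfc F hF Φ hΦ lam u u' hu E hE
end
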